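/- Let X = {x¹, x², x³} ⊂ ℝ² be a 3-directional mesh with x³ = x¹ + x² = (1,0)ᵀ and x¹₂ > 0, and let n₁, n₂, n₃ be positive integers. Define C_𝐧(x | X) = ( x¹₂ · (n₁−1)!(n₂−1)!(n₃−1)! )⁻¹ ∫_{−∞}^{x₁} ( u − ((x¹₁−1)/x¹₂) x₂ )₊^{n₁−1} ( u − (x¹₁/x¹₂) x₂ )₊^{n₂−1} (x₁−u)₊^{n₃−1} du. Then for x = (x₁,x₂) ∈ ℝ²: if x₂ ≥ 0, C_𝐧(x | X) = (1/x¹₂) Σ_{k=0}^{n₁−1} binom(n₂+k−1, k) (1/((n₁−1−k)! (n₂+n₃+k−1)!)) (x₂/x¹₂)^{n₁−1−k} ( x₁ − (x¹₁/x¹₂) x₂ )₊^{n₂+n₃+k−1}; and if x₂ < 0, C_𝐧(x | X) = (1/x¹₂) Σ_{k=0}^{n₂−1} binom(n₁+k−1, k) (1/((n₂−1−k)! (n₁+n₃+k−1)!)) ( −x₂/x¹₂ )^{n₂−1−k} ( x₁ − ((x¹₁−1)/x¹₂) x₂ )₊^{n₁+n₃+k−1}. -/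

import Mathlib

/-!
Once the two shifted knots are ordered, `a ≤ b`, the first factor is expanded on `u ≥ b` as
`(u - a)^p = ((u - b) + (b - a))^p`; for `u < b` the integrand vanishes anyway. This reduces the
cone spline to convolutions of two truncated powers, which are Beta integrals:
`∫ (u - b)₊^m (c - u)₊^r du = m! r! / (m + r + 1)! · (c - b)₊^(m + r + 1)`. The Beta integral
itself follows by induction on `r` from `c - u = (c - b) - (u - b)`, without integrating by parts.
The sign of `x₂` decides which knot is the smaller one, whence the two cases.
-/

open MeasureTheory

/-- Truncated power: `t₊^m`, with `t₊⁰` the indicator of `t ≥ 0`. -/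
noncomputable def truncPow (t : ℝ) (m : ℕ) : ℝ := if 0 ≤ t then t ^ m else 0

open Nat

theorem integral_sub_pow_mul_sub_pow (b c : ℝ) (m r : ℕ) :
    ∫ u in b..c, (u - b) ^ m * (c - u) ^ r
      = m ! * r ! / (m + r + 1)! * (c - b) ^ (m + r + 1) := by
  induction r generalizing m with
  | zero =>
    simp only [pow_zero, mul_one, intervalIntegral.integral_comp_sub_right (· ^ m), sub_self,
      integral_pow]
    rw [factorial_succ]
    push_cast
    field_simp
    simp
  | succ r ih =>
    have hsplit : ∀ u, (u - b) ^ m * (c - u) ^ (r + 1)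
        = (c - b) * ((u - b) ^ m * (c - u) ^ r) - (u - b) ^ (m + 1) * (c - u) ^ r :=
      fun u => by ring
    simp_rw [hsplit]
    rw [intervalIntegral.integral_sub
        ((Continuous.intervalIntegrable (by fun_prop) _ _).const_mul _)
        (Continuous.intervalIntegrable (by fun_prop) _ _),
      intervalIntegral.integral_const_mul, ih, ih,
      show m + 1 + r + 1 = m + r + 1 + 1 by ring, show m + (r + 1) + 1 = m + r + 1 + 1 by ring,
      factorial_succ (m + r + 1), factorial_succ m, factorial_succ r]
    push_cast
    field_simp
    ring

theorem truncPow_sub_mul_truncPow_sub_eq_indicator (b c : ℝ) (m r : ℕ) :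
    (fun u => truncPow (u - b) m * truncPow (c - u) r)
      = (Set.Icc b c).indicator fun u => (u - b) ^ m * (c - u) ^ r := by
  ext u
  by_cases hu : u ∈ Set.Icc b c
  · simp [hu, truncPow, hu.1, hu.2]
  · rw [Set.indicator_of_notMem hu]
    rcases not_and_or.1 hu with h | h <;> simp [truncPow, not_le.1 h]

theorem integrable_truncPow_sub_mul_truncPow_sub (b c : ℝ) (m r : ℕ) :
    Integrable fun u => truncPow (u - b) m * truncPow (c - u) r := by
  rw [truncPow_sub_mul_truncPow_sub_eq_indicator, integrable_indicator_iff measurableSet_Icc]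
  exact Continuous.integrableOn_Icc (by fun_prop)

theorem setIntegral_Iic_truncPow_sub_mul_truncPow_sub (b c : ℝ) (m r : ℕ) :
    ∫ u in Set.Iic c, truncPow (u - b) m * truncPow (c - u) r
      = m ! * r ! / (m + r + 1)! * truncPow (c - b) (m + r + 1) := by
  rw [truncPow_sub_mul_truncPow_sub_eq_indicator, setIntegral_indicator measurableSet_Icc,
    Set.inter_eq_self_of_subset_right Set.Icc_subset_Iic_self]
  by_cases hbc : b ≤ c
  · rw [integral_Icc_eq_integral_Ioc, ← intervalIntegral.integral_of_le hbc,
      integral_sub_pow_mul_sub_pow, truncPow, if_pos (sub_nonneg.2 hbc)]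
  · rw [Set.Icc_eq_empty hbc, truncPow, if_neg (by linarith)]
    simp

theorem truncPow_add_mul_truncPow {s : ℝ} (hs : 0 ≤ s) (t : ℝ) (p q : ℕ) :
    truncPow (t + s) p * truncPow t q
      = ∑ j ∈ Finset.range (p + 1), (p.choose j : ℝ) * s ^ (p - j) * truncPow t (q + j) := by
  by_cases ht : 0 ≤ t
  · simp only [truncPow, if_pos ht, if_pos (add_nonneg ht hs), add_pow, Finset.sum_mul]
    refine Finset.sum_congr rfl fun j _ => by ring
  · simp [truncPow, ht]

theorem setIntegral_Iic_truncPow_mul_truncPow_mul_truncPow {a b : ℝ} (hab : a ≤ b) (c : ℝ)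
    (p q r : ℕ) :
    (p ! * q ! * r ! : ℝ)⁻¹ *
        ∫ u in Set.Iic c, truncPow (u - a) p * truncPow (u - b) q * truncPow (c - u) r
      = ∑ k ∈ Finset.range (p + 1), ((q + k).choose k : ℝ) *
          (1 / ((p - k)! * (q + k + r + 1)!)) * (b - a) ^ (p - k) *
          truncPow (c - b) (q + k + r + 1) := by
  have hexpand : ∀ u, truncPow (u - a) p * truncPow (u - b) q * truncPow (c - u) r
      = ∑ k ∈ Finset.range (p + 1), (p.choose k : ℝ) * (b - a) ^ (p - k) *
          (truncPow (u - b) (q + k) * truncPow (c - u) r) := fun u => by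
    rw [show u - a = u - b + (b - a) by ring, truncPow_add_mul_truncPow (sub_nonneg.2 hab),
      Finset.sum_mul]
    exact Finset.sum_congr rfl fun k _ => by ring
  simp_rw [hexpand]
  rw [integral_finsetSum _ fun k _ =>
      ((integrable_truncPow_sub_mul_truncPow_sub b c (q + k) r).const_mul _).integrableOn,
    Finset.mul_sum]
  refine Finset.sum_congr rfl fun k hk => ?_
  have hkp : k ≤ p := Nat.lt_succ_iff.1 (Finset.mem_range.1 hk)
  rw [integral_const_mul, setIntegral_Iic_truncPow_sub_mul_truncPow_sub,
    Nat.cast_choose ℝ hkp, Nat.cast_choose ℝ (Nat.le_add_left k q), Nat.add_sub_cancel]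
  field_simp

/-- explicit formula for the cone spline `C_𝐧(x | X)` on the
3-directional mesh `X = {x¹, x², x³}` with `x³ = x¹ + x² = (1,0)ᵀ` and `x¹₂ > 0`,
where `x¹ = (x11, x12)ᵀ`.  The spline is given by its time-domain integral
representation. -/
theorem coneSpline_three_directional_mesh
    (x11 x12 : ℝ) (h12 : 0 < x12)
    (n₁ n₂ n₃ : ℕ) (h1 : 0 < n₁) (h2 : 0 < n₂) (h3 : 0 < n₃)
    (x₁ x₂ : ℝ)
    (C : ℝ)
    (hC : C = (x12 * (n₁ - 1).factorial * (n₂ - 1).factorial * (n₃ - 1).factorial)⁻¹ *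
        ∫ u in Set.Iic x₁,
          truncPow (u - (x11 - 1) / x12 * x₂) (n₁ - 1) *
            truncPow (u - x11 / x12 * x₂) (n₂ - 1) * truncPow (x₁ - u) (n₃ - 1)) :
    (0 ≤ x₂ →
      C = (1 / x12) * ∑ k ∈ Finset.range n₁,
        ((n₂ + k - 1).choose k : ℝ) *
          (1 / ((n₁ - 1 - k).factorial * (n₂ + n₃ + k - 1).factorial)) *
          (x₂ / x12) ^ (n₁ - 1 - k) *
          truncPow (x₁ - x11 / x12 * x₂) (n₂ + n₃ + k - 1)) ∧
    (x₂ < 0 →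
      C = (1 / x12) * ∑ k ∈ Finset.range n₂,
        ((n₁ + k - 1).choose k : ℝ) *
          (1 / ((n₂ - 1 - k).factorial * (n₁ + n₃ + k - 1).factorial)) *
          (-x₂ / x12) ^ (n₂ - 1 - k) *
          truncPow (x₁ - (x11 - 1) / x12 * x₂) (n₁ + n₃ + k - 1)) := by
  obtain ⟨p, rfl⟩ : ∃ p, n₁ = p + 1 := ⟨n₁ - 1, by omega⟩
  obtain ⟨q, rfl⟩ : ∃ q, n₂ = q + 1 := ⟨n₂ - 1, by omega⟩
  obtain ⟨r, rfl⟩ : ∃ r, n₃ = r + 1 := ⟨n₃ - 1, by omega⟩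
  have hchoose : ∀ m k, m + 1 + k - 1 = m + k := by omega
  have hdeg : ∀ m k, m + 1 + (r + 1) + k - 1 = m + k + r + 1 := by omega
  simp only [Nat.add_sub_cancel, hchoose, hdeg] at hC ⊢
  rw [hC, show ∀ I : ℝ, (x12 * p ! * q ! * r !)⁻¹ * I = 1 / x12 * ((p ! * q ! * r ! : ℝ)⁻¹ * I)
    from fun I => by ring]
  constructor
  · intro hx₂
    have hba : x11 / x12 * x₂ - (x11 - 1) / x12 * x₂ = x₂ / x12 := by ring
    rw [setIntegral_Iic_truncPow_mul_truncPow_mul_truncPow (by linarith [div_nonneg hx₂ h12.le]),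
      hba]
  · intro hx₂
    have hba : (x11 - 1) / x12 * x₂ - x11 / x12 * x₂ = -x₂ / x12 := by ring
    simp_rw [mul_comm (truncPow (_ - (x11 - 1) / x12 * x₂) p)]
    rw [mul_comm (p ! : ℝ), setIntegral_Iic_truncPow_mul_truncPow_mul_truncPow
      (by linarith [div_nonneg (neg_nonneg.2 hx₂.le) h12.le]), hba]
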